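/- arXiv:1211.1576 — 5 statements merged into one kernel-verified Lean document; each statement's English description precedes it below -/
import Mathlib

section
/- For all real z ≥ 1, (2π)^{1/2} exp(-z + (z - 1/2) log z) ≤ Γ(z) ≤ (2π)^{1/2} exp(-z + (z - 1/2) log z + 1/(12 z)). -/
/-!
Write `log Γ(x) = (x - 1/2) log x - x + log(2π)/2 + R(x)`. The functional equation of `Γ` gives
`R(x) - R(x + 1) = (x + 1/2) log(1 + 1/x) - 1`, a power series in `(2x + 1)⁻²` whose coefficients
lie between `0` and `1/3`; summing the geometric majorant shows
`0 ≤ R(x) - R(x + 1) ≤ 1/(12x) - 1/(12(x + 1))`. Euler's limit formula for `Γ` together with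
Stirling's formula for `n!` gives `R(z + n) → 0`, and telescoping yields `0 ≤ R(z) ≤ 1/(12z)`.
-/

open Real Filter Topology

lemma hasSum_add_half_mul_log_one_add_inv_sub_one {x : ℝ} (hx : 0 < x) :
    HasSum (fun k : ℕ => 1 / (2 * k + 3) * ((1 / (2 * x + 1)) ^ 2) ^ (k + 1))
      ((x + 1 / 2) * log (1 + x⁻¹) - 1) := by
  have hx' : 2 * x + 1 ≠ 0 := by positivity
  have h := (hasSum_log_one_add_inv hx).mul_left (x + 1 / 2)
  rw [← hasSum_nat_add_iff' 1, Finset.sum_range_one] at h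
  have hterm₀ : (x + 1 / 2) * (2 * (1 / (2 * ((0 : ℕ) : ℝ) + 1)) * (1 / (2 * x + 1)) ^ 1) = 1 := by
    norm_num
    field_simp
  rw [hterm₀] at h
  refine h.congr_fun fun k => ?_
  rw [← pow_mul]
  push_cast
  simp only [one_div, inv_pow]
  field_simp
  ring

lemma add_half_mul_log_one_add_inv_sub_one_nonneg {x : ℝ} (hx : 0 < x) :
    0 ≤ (x + 1 / 2) * log (1 + x⁻¹) - 1 :=
  (hasSum_add_half_mul_log_one_add_inv_sub_one hx).nonneg fun _ => by positivity

lemma add_half_mul_log_one_add_inv_sub_one_le {x : ℝ} (hx : 0 < x) :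
    (x + 1 / 2) * log (1 + x⁻¹) - 1 ≤ 1 / (12 * x) - 1 / (12 * (x + 1)) := by
  set q : ℝ := (1 / (2 * x + 1)) ^ 2 with hq
  have hq0 : 0 ≤ q := by positivity
  have hq1 : q < 1 := by
    rw [hq, div_pow, one_pow, div_lt_one (by positivity)]
    nlinarith
  have hgeom : HasSum (fun k : ℕ => 1 / 3 * q ^ (k + 1)) (q / (3 * (1 - q))) := by
    have h := (hasSum_geometric_of_lt_one hq0 hq1).mul_left (q / 3)
    rw [← div_div, div_eq_mul_inv _ (1 - q)]
    exact h.congr_fun fun k => by ring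
  calc (x + 1 / 2) * log (1 + x⁻¹) - 1
      ≤ q / (3 * (1 - q)) := by
        refine hasSum_le (fun k => ?_) (hasSum_add_half_mul_log_one_add_inv_sub_one hx) hgeom
        gcongr
        linarith [k.cast_nonneg (α := ℝ)]
    _ = 1 / (12 * x) - 1 / (12 * (x + 1)) := by
        have : (2 * x + 1) ^ 2 - 1 = 4 * x * (x + 1) := by ring
        rw [hq, div_pow, one_pow, one_sub_div (by positivity), this]
        field_simp
        ring

lemma Real.tendsto_add_mul_log_one_add_div_atTop (a t : ℝ) :
    Tendsto (fun x => (x + a) * log (1 + t / x)) atTop (𝓝 t) := by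
  have hlog : Tendsto (fun x => log (1 + t / x)) atTop (𝓝 0) := by
    have h : Tendsto (fun x => 1 + t / x) atTop (𝓝 1) := by
      simpa using ((tendsto_const_nhds (x := t)).div_atTop tendsto_id).const_add 1
    simpa [Function.comp_def] using (continuousAt_log one_ne_zero).tendsto.comp h
  simpa [add_mul] using (tendsto_mul_log_one_add_div_atTop t).add (hlog.const_mul a)

lemma Real.Gamma_add_nat_eq_mul_prod {z : ℝ} (hz : 0 < z) (n : ℕ) :
    Gamma (z + n) = Gamma z * ∏ j ∈ Finset.range n, (z + j) := by
  induction n with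
  | zero => simp
  | succ n ih =>
    rw [Nat.cast_succ, ← add_assoc, Gamma_add_one (by positivity), ih, Finset.prod_range_succ]
    ring

noncomputable def stirlingRemainder (x : ℝ) : ℝ :=
  log (Gamma x) - ((x - 1 / 2) * log x - x + log (2 * π) / 2)

lemma stirlingRemainder_sub_stirlingRemainder_add_one {x : ℝ} (hx : 0 < x) :
    stirlingRemainder x - stirlingRemainder (x + 1) = (x + 1 / 2) * log (1 + x⁻¹) - 1 := by
  have hΓ : log (Gamma (x + 1)) = log x + log (Gamma x) := by
    rw [Gamma_add_one hx.ne', log_mul hx.ne' (Gamma_pos_of_pos hx).ne']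
  have hinv : log (1 + x⁻¹) = log (x + 1) - log x := by
    rw [← log_div (by positivity) hx.ne', add_div, div_self hx.ne', one_div, add_comm]
  rw [stirlingRemainder, stirlingRemainder, hΓ, hinv]
  ring

section

variable {z : ℝ}

lemma antitone_stirlingRemainder_add_nat (hz : 0 < z) :
    Antitone fun n : ℕ => stirlingRemainder (z + n) :=
  antitone_nat_of_succ_le fun n => by
    have h := stirlingRemainder_sub_stirlingRemainder_add_one (x := z + n) (by positivity)
    have h' := add_half_mul_log_one_add_inv_sub_one_nonneg (x := z + n) (by positivity)
    push_cast
    rw [← add_assoc]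
    linarith

lemma monotone_stirlingRemainder_sub_add_nat (hz : 0 < z) :
    Monotone fun n : ℕ => stirlingRemainder (z + n) - 1 / (12 * (z + n)) :=
  monotone_nat_of_le_succ fun n => by
    have h := stirlingRemainder_sub_stirlingRemainder_add_one (x := z + n) (by positivity)
    have h' := add_half_mul_log_one_add_inv_sub_one_le (x := z + n) (by positivity)
    push_cast
    rw [← add_assoc]
    linarith

lemma stirlingRemainder_add_nat_eq (hz : 0 < z) {n : ℕ} (hn : n ≠ 0) :
    stirlingRemainder (z + n) =
      (log (Gamma z) - log (GammaSeq z n)) + (log (Stirling.stirlingSeq n) - log √π) + z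
        - (n + z + 1 / 2) * log (1 + z / n) := by
  have hn0 : (0 : ℝ) < n := by positivity
  set P := ∏ j ∈ Finset.range n, (z + j)
  have hP : 0 < P := Finset.prod_pos fun j _ => by positivity
  have hΓ : log (Gamma (z + n)) = log (Gamma z) + log P := by
    rw [Real.Gamma_add_nat_eq_mul_prod hz, log_mul (Gamma_pos_of_pos hz).ne' hP.ne']
  have hGammaSeq : log (GammaSeq z n) = z * log n + log n.factorial - log P - log (z + n) := by
    rw [GammaSeq, Finset.prod_range_succ, log_div (by positivity) (by positivity),
      log_mul (by positivity) (by positivity), log_mul hP.ne' (by positivity), log_rpow hn0]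
    ring
  have hfactorial : log (Stirling.stirlingSeq n) =
      log n.factorial - (log 2 + log n) / 2 - n * (log n - 1) := by
    rw [Stirling.log_stirlingSeq_formula, log_mul two_ne_zero hn0.ne',
      log_div hn0.ne' (exp_ne_zero 1), log_exp]
    ring
  have hlog : log (z + n) = log n + log (1 + z / n) := by
    rw [← log_mul hn0.ne' (by positivity), mul_add, mul_div_cancel₀ _ hn0.ne', mul_one, add_comm]
  rw [stirlingRemainder, hΓ, hGammaSeq, hfactorial, hlog, log_sqrt pi_pos.le,
    log_mul two_ne_zero pi_ne_zero]
  ring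

lemma tendsto_stirlingRemainder_add_nat (hz : 0 < z) :
    Tendsto (fun n : ℕ => stirlingRemainder (z + n)) atTop (𝓝 0) := by
  have hGamma : Tendsto (fun n => log (Gamma z) - log (GammaSeq z n)) atTop (𝓝 0) := by
    simpa using (tendsto_const_nhds (x := log (Gamma z))).sub
      ((continuousAt_log (Gamma_pos_of_pos hz).ne').tendsto.comp (GammaSeq_tendsto_Gamma z))
  have hStirling : Tendsto (fun n => log (Stirling.stirlingSeq n) - log √π) atTop (𝓝 0) := by
    simpa using ((continuousAt_log (by positivity)).tendsto.comp
      Stirling.tendsto_stirlingSeq_sqrt_pi).sub_const (log √π)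
  have hlog : Tendsto (fun n : ℕ => (n + z + 1 / 2) * log (1 + z / n)) atTop (𝓝 z) := by
    simpa [Function.comp_def, add_assoc] using
      (Real.tendsto_add_mul_log_one_add_div_atTop (z + 1 / 2) z).comp tendsto_natCast_atTop_atTop
  refine (((hGamma.add hStirling).add_const z).sub hlog).congr' ?_ |>.trans (by simp)
  filter_upwards [eventually_ne_atTop 0] with n hn
  exact (stirlingRemainder_add_nat_eq hz hn).symm

lemma stirlingRemainder_nonneg (hz : 0 < z) : 0 ≤ stirlingRemainder z := by
  simpa using (antitone_stirlingRemainder_add_nat hz).le_of_tendsto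
    (tendsto_stirlingRemainder_add_nat hz) 0

lemma stirlingRemainder_le (hz : 0 < z) : stirlingRemainder z ≤ 1 / (12 * z) := by
  have hinv : Tendsto (fun n : ℕ => 1 / (12 * (z + n))) atTop (𝓝 0) :=
    tendsto_const_nhds.div_atTop <| Tendsto.const_mul_atTop (by norm_num) <|
      tendsto_atTop_add_const_left _ z tendsto_natCast_atTop_atTop
  have h := (monotone_stirlingRemainder_sub_add_nat hz).ge_of_tendsto
    ((tendsto_stirlingRemainder_add_nat hz).sub hinv) 0
  simpa [sub_nonpos] using h

end

/-- Stirling-type bounds for the Gamma function: for `z ≥ 1`,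
`√(2π) e^{-z+(z-1/2)log z} ≤ Γ(z) ≤ √(2π) e^{-z+(z-1/2)log z + 1/(12z)}`. -/
theorem gamma_stirling_bounds (z : ℝ) (hz : 1 ≤ z) :
    (2 * Real.pi) ^ ((1 : ℝ) / 2) * Real.exp (-z + (z - 1 / 2) * Real.log z) ≤ Real.Gamma z ∧
    Real.Gamma z ≤
      (2 * Real.pi) ^ ((1 : ℝ) / 2) *
        Real.exp (-z + (z - 1 / 2) * Real.log z + 1 / (12 * z)) := by
  have hz0 : 0 < z := by linarith
  have hGamma : Gamma z =
      (2 * π) ^ ((1 : ℝ) / 2) * exp (-z + (z - 1 / 2) * log z + stirlingRemainder z) := by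
    conv_lhs => rw [← exp_log (Gamma_pos_of_pos hz0)]
    rw [rpow_def_of_pos (by positivity), ← exp_add, stirlingRemainder]
    ring_nf
  rw [hGamma]
  constructor <;> gcongr _ * exp ?_
  · linarith [stirlingRemainder_nonneg hz0]
  · linarith [stirlingRemainder_le hz0]
end

section
/- Let X² be distributed as a product of n i.i.d. Gamma(k,1) variables (n, k positive integers) and let r > 0 satisfy r^{2/n} < k. Then P(X² < r²) ≥ (r^{2/n}/(2k))^{nk}. -/
open MeasureTheory ProbabilityTheory

/-!
If every factor of `Y₁ ⋯ Yₙ` lies in `(0, s)` with `s = r^{2/n}`, the product is below `r²`,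
so `P(X² < r²) ≥ P(Y < s)ⁿ` for `Y ~ Gamma(k, 1)`. On `(0, s)` the Gamma density is at least
`x^{k-1} e^{-s} / (k-1)!`, whence `P(Y < s) ≥ s^k e^{-s} / k! ≥ (s/(2k))^k` because
`k! e^k ≤ (2k)^k` for `k ≥ 2`. For `k = 1` the factor `e^{-s}` is too lossy and one uses
`e^{-x} ≥ 1 - x` instead, which gives `P(Y < s) ≥ s - s²/2 ≥ s/2`.
-/

/-- The distribution of the product of `n` i.i.d. `Gamma(k,1)` random variables. -/
noncomputable def prodGammaMeasure (n k : ℕ) : Measure ℝ :=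
  (Measure.pi fun _ : Fin n => gammaMeasure k 1).map (fun y => ∏ j, y j)

open Set Real
open scoped Nat

lemma factorial_mul_exp_le_two_mul_pow {k : ℕ} (hk : 2 ≤ k) :
    (k ! : ℝ) * exp k ≤ (2 * k) ^ k := by
  induction k, hk using Nat.le_induction with
  | base =>
    have he : exp 1 < 2.7182818286 := exp_one_lt_d9
    have h2 : exp 2 < 8 := by
      rw [show (2 : ℝ) = 1 + 1 by norm_num, exp_add]
      nlinarith [exp_pos 1]
    norm_num [Nat.factorial]
    linarith
  | succ k hk ih =>
    have hk0 : (0 : ℝ) < k := by positivity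
    -- Bernoulli: `(1 + 1/k)^k ≥ 2`, which absorbs the factor `e / 2` gained in the step
    have hbernoulli : 2 * (2 * k : ℝ) ^ k ≤ (2 * (k + 1)) ^ k := by
      have h := one_add_mul_le_pow (a := (k : ℝ)⁻¹) (by linarith [inv_pos.mpr hk0]) k
      rw [mul_inv_cancel₀ hk0.ne'] at h
      calc 2 * (2 * k : ℝ) ^ k ≤ (1 + (k : ℝ)⁻¹) ^ k * (2 * k) ^ k := by
            gcongr; linarith
        _ = (2 * (k + 1)) ^ k := by rw [← mul_pow]; congr 1; field_simp
    have he : exp 1 ≤ 4 := by linarith [exp_one_lt_d9]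
    calc ((k + 1)! : ℝ) * exp (k + 1 : ℕ) = (k + 1) * exp 1 * (k ! * exp k) := by
          push_cast [Nat.factorial_succ]; rw [exp_add]; ring
      _ ≤ (k + 1) * 4 * (2 * k) ^ k := by gcongr
      _ ≤ (k + 1) * 2 * (2 * (k + 1)) ^ k := by nlinarith
      _ = (2 * (k + 1 : ℕ)) ^ (k + 1) := by push_cast; ring

lemma gammaPDFReal_natCast_add_one_one {m : ℕ} {x : ℝ} (hx : 0 ≤ x) :
    gammaPDFReal (m + 1 : ℕ) 1 x = x ^ m * exp (-x) / m ! := by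
  rw [gammaPDFReal, if_pos hx, one_rpow, Nat.cast_succ, Gamma_nat_eq_factorial,
    add_sub_cancel_right, rpow_natCast, one_mul]
  ring

lemma ofReal_setIntegral_le_gammaMeasure {a r : ℝ} {S : Set ℝ} (hS : MeasurableSet S)
    {g : ℝ → ℝ} (hg : IntegrableOn g S) (hg0 : ∀ x ∈ S, 0 ≤ g x)
    (hle : ∀ x ∈ S, g x ≤ gammaPDFReal a r x) :
    ENNReal.ofReal (∫ x in S, g x) ≤ gammaMeasure a r S := by
  rw [gammaMeasure, withDensity_apply _ hS,
    ofReal_integral_eq_lintegral_ofReal hg ((ae_restrict_iff' hS).mpr (ae_of_all _ hg0))]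
  exact setLIntegral_mono (measurable_gammaPDFReal a r).ennreal_ofReal
    fun x hx => ENNReal.ofReal_le_ofReal (hle x hx)

lemma ofReal_half_le_gammaMeasure_one_one_Ioo {s : ℝ} (hs : 0 ≤ s) (hs1 : s ≤ 1) :
    ENNReal.ofReal (s / 2) ≤ gammaMeasure 1 1 (Ioo 0 s) := by
  have hintegral : ∫ x in Ioo 0 s, (1 - x) = s - s ^ 2 / 2 := by
    rw [← integral_Ioc_eq_integral_Ioo, ← intervalIntegral.integral_of_le hs,
      intervalIntegral.integral_sub intervalIntegrable_const
        intervalIntegral.intervalIntegrable_id]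
    simp [integral_id]
  calc ENNReal.ofReal (s / 2) ≤ ENNReal.ofReal (∫ x in Ioo 0 s, (1 - x)) :=
        ENNReal.ofReal_le_ofReal (by rw [hintegral]; nlinarith)
    _ ≤ gammaMeasure 1 1 (Ioo 0 s) := by
      refine ofReal_setIntegral_le_gammaMeasure measurableSet_Ioo
        ((continuous_const.sub continuous_id).integrableOn_Icc.mono_set Ioo_subset_Icc_self)
        (fun x hx => by linarith [hx.2]) fun x hx => ?_
      have h := gammaPDFReal_natCast_add_one_one (m := 0) hx.1.le
      norm_num at h
      rw [h]
      linarith [add_one_le_exp (-x)]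

lemma ofReal_pow_mul_exp_div_factorial_le_gammaMeasure_Ioo {k : ℕ} (hk : 0 < k) {s : ℝ}
    (hs : 0 ≤ s) :
    ENNReal.ofReal (s ^ k * exp (-s) / k !) ≤ gammaMeasure k 1 (Ioo 0 s) := by
  obtain ⟨m, rfl⟩ : ∃ m, k = m + 1 := ⟨k - 1, by omega⟩
  have hintegral : ∫ x in Ioo 0 s, x ^ m * exp (-s) / m ! =
      s ^ (m + 1) * exp (-s) / (m + 1)! := by
    rw [← integral_Ioc_eq_integral_Ioo, ← intervalIntegral.integral_of_le hs,
      intervalIntegral.integral_div, intervalIntegral.integral_mul_const, integral_pow,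
      Nat.factorial_succ]
    push_cast
    field_simp
    ring
  rw [← hintegral]
  refine ofReal_setIntegral_le_gammaMeasure measurableSet_Ioo
    ((by fun_prop : Continuous fun x : ℝ => x ^ m * exp (-s) / m !).integrableOn_Icc.mono_set
      Ioo_subset_Icc_self)
    (fun x hx => by have hx0 := hx.1.le; positivity) fun x hx => ?_
  have hx0 := hx.1.le
  rw [gammaPDFReal_natCast_add_one_one hx0]
  gcongr
  exact hx.2.le

lemma ofReal_div_two_mul_pow_le_gammaMeasure_Ioo {k : ℕ} (hk : 0 < k) {s : ℝ}
    (hs : 0 ≤ s) (hsk : s ≤ k) :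
    ENNReal.ofReal ((s / (2 * k)) ^ k) ≤ gammaMeasure k 1 (Ioo 0 s) := by
  rcases Nat.lt_or_ge k 2 with hk1 | hk2
  · obtain rfl : k = 1 := by omega
    norm_num at hsk ⊢
    exact ofReal_half_le_gammaMeasure_one_one_Ioo hs hsk
  have hfactorial : (k ! : ℝ) ≤ exp (-s) * (2 * k) ^ k := by
    calc (k ! : ℝ) = exp (-s) * (k ! * exp s) := by
          rw [mul_left_comm, ← exp_add, neg_add_cancel, exp_zero, mul_one]
      _ ≤ exp (-s) * (k ! * exp k) := by gcongr
      _ ≤ exp (-s) * (2 * k) ^ k := by gcongr; exact factorial_mul_exp_le_two_mul_pow hk2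
  refine le_trans (ENNReal.ofReal_le_ofReal ?_)
    (ofReal_pow_mul_exp_div_factorial_le_gammaMeasure_Ioo hk hs)
  rw [div_pow, div_le_div_iff₀ (by positivity) (by positivity)]
  calc s ^ k * (k ! : ℝ) ≤ s ^ k * (exp (-s) * (2 * k) ^ k) := by gcongr
    _ = s ^ k * exp (-s) * (2 * k) ^ k := by ring

lemma measure_Ioo_pow_le_map_prod_Iio {ι : Type*} [Fintype ι] [Nonempty ι]
    (μ : Measure ℝ) [SigmaFinite μ] (s : ℝ) :
    μ (Ioo 0 s) ^ Fintype.card ι ≤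
      (Measure.pi fun _ : ι => μ).map (fun y => ∏ j, y j) (Iio (s ^ Fintype.card ι)) := by
  rw [Measure.map_apply (Finset.measurable_prod _ fun i _ => measurable_pi_apply i)
      measurableSet_Iio, ← Finset.card_univ, ← Finset.prod_const, ← Measure.pi_pi]
  refine measure_mono fun y hy => ?_
  simp only [mem_pi, mem_univ, true_implies, mem_Ioo] at hy
  simpa [Finset.prod_const] using Finset.prod_lt_prod_of_nonempty (fun i _ => (hy i).1)
    (fun i _ => (hy i).2) Finset.univ_nonempty

theorem prodGamma_lower_tail_lower_bound_general {Ω : Type*} [MeasureSpace Ω]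
    [IsProbabilityMeasure (ℙ : Measure Ω)]
    (n k : ℕ) (hn : 0 < n) (hk : 0 < k)
    (X : Ω → ℝ) (hXm : Measurable X)
    (hX : Measure.map (fun ω => X ω ^ 2) ℙ = prodGammaMeasure n k)
    (r : ℝ) (hr : 0 < r) (hrk : r ^ ((2 : ℝ) / n) < (k : ℝ)) :
    (r ^ ((2 : ℝ) / n) / (2 * (k : ℝ))) ^ (n * k) ≤ (ℙ {ω | X ω ^ 2 < r ^ 2}).toReal := by
  set s := r ^ ((2 : ℝ) / n)
  have hs : 0 < s := by positivity
  have hsn : s ^ n = r ^ 2 := by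
    rw [← rpow_mul_natCast hr.le, div_mul_cancel₀ _ (by positivity), rpow_two]
  have hP : ℙ {ω | X ω ^ 2 < r ^ 2} = prodGammaMeasure n k (Iio (s ^ n)) := by
    rw [hsn, ← hX, Measure.map_apply (by fun_prop) measurableSet_Iio]
    rfl
  have : IsProbabilityMeasure (gammaMeasure k 1) :=
    isProbabilityMeasure_gammaMeasure (by exact_mod_cast hk) one_pos
  have : Nonempty (Fin n) := ⟨⟨0, hn⟩⟩
  have hbound : ENNReal.ofReal ((s / (2 * k)) ^ (n * k)) ≤ ℙ {ω | X ω ^ 2 < r ^ 2} :=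
    calc ENNReal.ofReal ((s / (2 * k)) ^ (n * k))
        = ENNReal.ofReal ((s / (2 * k)) ^ k) ^ n := by
          rw [mul_comm n k, pow_mul, ENNReal.ofReal_pow (by positivity)]
      _ ≤ gammaMeasure k 1 (Ioo 0 s) ^ n :=
          pow_le_pow_left' (ofReal_div_two_mul_pow_le_gammaMeasure_Ioo hk hs.le hrk.le) n
      _ ≤ prodGammaMeasure n k (Iio (s ^ n)) := by
          simpa [prodGammaMeasure] using
            measure_Ioo_pow_le_map_prod_Iio (ι := Fin n) (gammaMeasure k 1) s
      _ = ℙ {ω | X ω ^ 2 < r ^ 2} := hP.symm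
  exact (ENNReal.ofReal_le_iff_le_toReal (measure_ne_top _ _)).mp hbound

/-- Lower bound `P(X² < r²) ≥ (r^{2/n}/(2k))^{nk}` when `r^{2/n} < k`. -/
theorem prodGamma_lower_tail_lower_bound {Ω : Type*} [MeasureSpace Ω]
    [IsProbabilityMeasure (ℙ : Measure Ω)]
    (n k : ℕ) (hn : 0 < n) (hk : 0 < k)
    (X : Ω → ℝ) (hXm : Measurable X) (hX0 : ∀ ω, 0 ≤ X ω)
    (hX : Measure.map (fun ω => X ω ^ 2) ℙ = prodGammaMeasure n k)
    (r : ℝ) (hr : 0 < r) (hrk : r ^ ((2 : ℝ) / n) < (k : ℝ)) :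
    (r ^ ((2 : ℝ) / n) / (2 * (k : ℝ))) ^ (n * k) ≤ (ℙ {ω | X ω ^ 2 < r ^ 2}).toReal :=
  prodGamma_lower_tail_lower_bound_general n k hn hk X hXm hX r hr hrk
end

section
/- Let n, k be positive integers with k ≥ 1, and let X² be distributed as a product of n i.i.d. Gamma(k,1) variables. Then for r > 0, P(X² < r²) ≤ exp((k − 1/2)(n + log(r²) − n log k) + n/6). -/
/-!
Chernoff's bound for the lower tail of a positive variable `Y`: `P(Y < t) ≤ t^α E[Y^{-α}]` for
`α ≥ 0`. For `Y = Y₁ ⋯ Yₙ` with i.i.d. `Yⱼ ~ Gamma(k, 1)` the negative moment factorises,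
`E[Y^{-α}] = (Γ(k - α) / Γ(k))ⁿ`, and the choice `α = k - 1/2` gives `Γ(1/2) = √π`. Stirling's
lower bound `k! ≥ √(2πk) (k/e)^k` turns `√π / Γ(k)` into `exp((k - 1/2)(1 - log k) + 1/6)`.
-/

open MeasureTheory ProbabilityTheory

open Real Set Filter
open scoped ENNReal Nat

theorem gammaMeasure_ae_pos (a r : ℝ) : ∀ᵐ x ∂gammaMeasure a r, 0 < x := by
  have hIic : {x : ℝ | ¬ 0 < x} = Iic 0 := by ext; simp
  rw [ae_iff, hIic, gammaMeasure, withDensity_apply _ measurableSet_Iic,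
    setLIntegral_congr Iio_ae_eq_Iic.symm]
  exact lintegral_gammaPDF_of_nonpos le_rfl

theorem lintegral_rpow_gammaMeasure {a r p : ℝ} (ha : 0 < a) (hr : 0 < r) (hap : 0 < a + p) :
    ∫⁻ x, ENNReal.ofReal (x ^ p) ∂gammaMeasure a r
      = ENNReal.ofReal (Gamma (a + p) / (Gamma a * r ^ p)) := by
  set c := r ^ a / Gamma a with hc_def
  have hdensity : ∀ᵐ x, gammaPDF a r x * ENNReal.ofReal (x ^ p) =
      (Ioi 0).indicator (fun x => ENNReal.ofReal (c * (x ^ (a + p - 1) * exp (-(r * x))))) x := by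
    filter_upwards [volume.ae_ne 0] with x hx0
    rcases hx0.lt_or_gt with hx | hx
    · simp [gammaPDF_of_neg hx, hx.not_gt]
    · rw [gammaPDF_of_nonneg hx.le, indicator_of_mem (mem_Ioi.2 hx),
        ← ENNReal.ofReal_mul (by positivity)]
      congr 1
      rw [show a + p - 1 = (a - 1) + p by ring, rpow_add hx]
      ring
  have hintegral : ∫ x in Ioi 0, x ^ (a + p - 1) * exp (-(r * x))
      = (1 / r) ^ (a + p) * Gamma (a + p) := integral_rpow_mul_exp_neg_mul_Ioi hap hr
  have hint : IntegrableOn (fun x => x ^ (a + p - 1) * exp (-(r * x))) (Ioi 0) :=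
    Integrable.of_integral_ne_zero (by rw [hintegral]; have := Gamma_pos_of_pos hap; positivity)
  rw [gammaMeasure, lintegral_withDensity_eq_lintegral_mul _ (f := gammaPDF a r)
      (measurable_gammaPDFReal a r).ennreal_ofReal (by fun_prop), Pi.mul_def,
    lintegral_congr_ae hdensity, lintegral_indicator measurableSet_Ioi,
    ← ofReal_integral_eq_lintegral_ofReal (hint.const_mul c)
      ((ae_restrict_iff' measurableSet_Ioi).2 (ae_of_all _ fun x (hx : 0 < x) => by positivity)),
    integral_const_mul, hintegral]
  congr 1
  rw [div_rpow zero_le_one hr.le, one_rpow, rpow_add hr, hc_def]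
  field_simp

section PiMeasure

variable {ι : Type*} [Fintype ι]

theorem lintegral_fintype_prod_eq_pow {E : Type*} [MeasurableSpace E] (μ : Measure E)
    [IsProbabilityMeasure μ] {f : E → ℝ≥0∞} (hf : Measurable f) :
    ∫⁻ y, ∏ i, f (y i) ∂Measure.pi (fun _ : ι => μ) = (∫⁻ x, f x ∂μ) ^ Fintype.card ι := by
  calc ∫⁻ y, ∏ i, f (y i) ∂Measure.pi (fun _ : ι => μ)
      = ∏ i, ∫⁻ y, f (y i) ∂Measure.pi (fun _ : ι => μ) :=
        lintegral_prod_eq_prod_lintegral_of_indepFun _ _ (iIndepFun_pi fun _ => hf.aemeasurable)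
          fun i => hf.comp (measurable_pi_apply i)
    _ = (∫⁻ x, f x ∂μ) ^ Fintype.card ι := by
        simp_rw [(measurePreserving_eval (fun _ : ι => μ) _).lintegral_comp hf]
        rw [Finset.prod_const, Finset.card_univ]

theorem ae_pi_forall_of_ae {E : Type*} [MeasurableSpace E] {μ : Measure E} [SigmaFinite μ]
    {P : E → Prop} (h : ∀ᵐ x ∂μ, P x) : ∀ᵐ y ∂Measure.pi (fun _ : ι => μ), ∀ i, P (y i) :=
  eventually_all.2 fun i => (Measure.tendsto_eval_ae_ae (i := i)).eventually h

theorem ae_pos_map_prod_pi {μ : Measure ℝ} [SigmaFinite μ] (hμ : ∀ᵐ x ∂μ, 0 < x) :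
    ∀ᵐ x ∂(Measure.pi fun _ : ι => μ).map (fun y => ∏ i, y i), 0 < x := by
  rw [ae_map_iff (by fun_prop) measurableSet_Ioi]
  filter_upwards [ae_pi_forall_of_ae hμ] with y hy
  exact Finset.prod_pos fun i _ => hy i

theorem lintegral_rpow_map_prod_pi {μ : Measure ℝ} [IsProbabilityMeasure μ]
    (hμ : ∀ᵐ x ∂μ, 0 ≤ x) (p : ℝ) :
    ∫⁻ x, ENNReal.ofReal (x ^ p) ∂(Measure.pi fun _ : ι => μ).map (fun y => ∏ i, y i)
      = (∫⁻ x, ENNReal.ofReal (x ^ p) ∂μ) ^ Fintype.card ι := by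
  rw [lintegral_map (by fun_prop) (by fun_prop),
    ← lintegral_fintype_prod_eq_pow μ (f := fun x => ENNReal.ofReal (x ^ p)) (by fun_prop)]
  refine lintegral_congr_ae ?_
  filter_upwards [ae_pi_forall_of_ae hμ] with y hy
  rw [← finsetProd_rpow _ _ fun i _ => hy i,
    ENNReal.ofReal_prod_of_nonneg fun i _ => rpow_nonneg (hy i) p]

end PiMeasure

theorem measure_Iio_le_rpow_mul_lintegral_rpow_neg {ν : Measure ℝ} (hν : ∀ᵐ x ∂ν, 0 < x)
    {t s : ℝ} (ht : 0 < t) (hs : 0 ≤ s) :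
    ν (Iio t) ≤ ENNReal.ofReal (t ^ s) * ∫⁻ x, ENNReal.ofReal (x ^ (-s)) ∂ν := by
  rw [← lintegral_const_mul _ (by fun_prop), ← lintegral_indicator_one measurableSet_Iio]
  refine lintegral_mono_ae ?_
  filter_upwards [hν] with x hx
  by_cases hxt : x < t
  · rw [indicator_of_mem (mem_Iio.2 hxt), Pi.one_apply, ← ENNReal.ofReal_mul (by positivity),
      ENNReal.one_le_ofReal, rpow_neg hx.le, ← div_eq_mul_inv, ← div_rpow ht.le hx.le]
    exact one_le_rpow ((one_le_div hx).2 hxt.le) hs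
  · simp [indicator_of_notMem (notMem_Iio.2 (not_lt.1 hxt))]

theorem sqrt_pi_div_Gamma_natCast_le {k : ℕ} (hk : k ≠ 0) :
    √π / Gamma k ≤ exp ((k - 1 / 2) * (1 - log k) + 1 / 6) := by
  have hk' : (0 : ℝ) < k := by positivity
  have hfactorial : (k : ℝ) * Gamma k = k ! := by
    rw [← Gamma_add_one hk'.ne', Gamma_nat_eq_factorial]
  have hΓ : 0 < Gamma k := Gamma_pos_of_pos hk'
  have hlogΓ : log (Gamma k) = log k ! - log k := by
    rw [← hfactorial, log_mul hk'.ne' hΓ.ne']; ring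
  have hstirling := Stirling.le_log_factorial_stirling hk
  rw [log_mul two_ne_zero pi_ne_zero] at hstirling
  rw [← exp_log (by positivity : 0 < √π / Gamma k), exp_le_exp,
    log_div (sqrt_ne_zero'.2 pi_pos) hΓ.ne', log_sqrt pi_pos.le, hlogΓ]
  -- Stirling leaves the margin `log 2 / 2 - 1 / 3`, positive since `log 2 > 2 / 3`
  linarith [log_two_gt_d9]

theorem prodGammaMeasure_Iio_le {n k : ℕ} (hk : k ≠ 0) {t : ℝ} (ht : 0 < t) :
    prodGammaMeasure n k (Iio t) ≤ ENNReal.ofReal (t ^ ((k : ℝ) - 1 / 2) * (√π / Gamma k) ^ n) := by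
  have hk1 : (1 : ℝ) ≤ k := by exact_mod_cast Nat.one_le_iff_ne_zero.2 hk
  have hk' : (0 : ℝ) < k := by linarith
  have hΓ : 0 ≤ √π / Gamma k := div_nonneg (sqrt_nonneg _) (Gamma_pos_of_pos hk').le
  have := isProbabilityMeasure_gammaMeasure hk' one_pos
  have hpos : ∀ᵐ x ∂gammaMeasure k 1, 0 < x := gammaMeasure_ae_pos _ _
  calc prodGammaMeasure n k (Iio t)
      ≤ ENNReal.ofReal (t ^ ((k : ℝ) - 1 / 2)) *
          ∫⁻ x, ENNReal.ofReal (x ^ (-((k : ℝ) - 1 / 2))) ∂prodGammaMeasure n k :=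
        measure_Iio_le_rpow_mul_lintegral_rpow_neg (ae_pos_map_prod_pi hpos) ht (by linarith)
    _ = _ := by
        rw [prodGammaMeasure, lintegral_rpow_map_prod_pi (hpos.mono fun _ => le_of_lt),
          lintegral_rpow_gammaMeasure hk' one_pos (by linarith), Fintype.card_fin,
          show (k : ℝ) + -((k : ℝ) - 1 / 2) = 1 / 2 by ring, Gamma_one_half_eq, one_rpow, mul_one,
          ← ENNReal.ofReal_pow hΓ, ← ENNReal.ofReal_mul (by positivity)]

theorem prodGamma_lower_tail_exp_upper_bound_general {Ω : Type*} [MeasureSpace Ω]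
    [IsProbabilityMeasure (ℙ : Measure Ω)]
    (n k : ℕ) (hk : 1 ≤ k)
    (X : Ω → ℝ) (hXm : Measurable X)
    (hX : Measure.map (fun ω => X ω ^ 2) ℙ = prodGammaMeasure n k)
    (r : ℝ) (hr : 0 < r) :
    (ℙ {ω | X ω ^ 2 < r ^ 2}).toReal ≤
      Real.exp (((k : ℝ) - 1 / 2) * ((n : ℝ) + Real.log (r ^ 2) - (n : ℝ) * Real.log (k : ℝ))
        + (n : ℝ) / 6) := by
  have hk0 : k ≠ 0 := by omega
  have hr2 : 0 < r ^ 2 := by positivity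
  have hprob : ℙ {ω | X ω ^ 2 < r ^ 2} = prodGammaMeasure n k (Iio (r ^ 2)) := by
    rw [← hX, Measure.map_apply (hXm.pow_const 2) measurableSet_Iio]; rfl
  rw [hprob]
  refine ENNReal.toReal_le_of_le_ofReal (exp_nonneg _)
    ((prodGammaMeasure_Iio_le hk0 hr2).trans (ENNReal.ofReal_le_ofReal ?_))
  calc (r ^ 2) ^ ((k : ℝ) - 1 / 2) * (√π / Gamma k) ^ n
      ≤ exp (log (r ^ 2) * ((k : ℝ) - 1 / 2))
          * exp (((k : ℝ) - 1 / 2) * (1 - log k) + 1 / 6) ^ n := by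
        rw [rpow_def_of_pos hr2]
        gcongr
        exact sqrt_pi_div_Gamma_natCast_le hk0
    _ = _ := by
        rw [← exp_nat_mul, ← exp_add]
        congr 1
        ring

/-- Upper bound `P(X² < r²) ≤ exp((k − 1/2)(n + log(r²) − n log k) + n/6)`. -/
theorem prodGamma_lower_tail_exp_upper_bound {Ω : Type*} [MeasureSpace Ω]
    [IsProbabilityMeasure (ℙ : Measure Ω)]
    (n k : ℕ) (hn : 0 < n) (hk : 1 ≤ k)
    (X : Ω → ℝ) (hXm : Measurable X) (hX0 : ∀ ω, 0 ≤ X ω)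
    (hX : Measure.map (fun ω => X ω ^ 2) ℙ = prodGammaMeasure n k)
    (r : ℝ) (hr : 0 < r) :
    (ℙ {ω | X ω ^ 2 < r ^ 2}).toReal ≤
      Real.exp (((k : ℝ) - 1 / 2) * ((n : ℝ) + Real.log (r ^ 2) - (n : ℝ) * Real.log (k : ℝ))
        + (n : ℝ) / 6) :=
  prodGamma_lower_tail_exp_upper_bound_general n k hk X hXm hX r hr
end

section
/- Let R_1, …, R_N be independent nonnegative random variables with R_k² distributed as a product of n i.i.d. Gamma(k,1) variables, for a fixed positive integer n and fixed N. Then lim_{r→∞} r^{−2/n} · log ∏_{k=1}^N P(R_k² > r²) = −nN. -/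
open MeasureTheory ProbabilityTheory Filter

/-!
Put `s = r ^ (2 / n)`, so that the `k`-th factor is `P(Y₁ ⋯ Yₙ > sⁿ)` for i.i.d.
`Yᵢ ~ Gamma(k, 1)`. From below, the event contains `{Yᵢ > s for all i}`, of probability
`P(Y₁ > s)ⁿ ≥ e^{-n s + O(log s)}`. From above, by AM-GM the event forces `Y₁ + ⋯ + Yₙ ≥ n s`,
and the Chernoff bound with tilt `1 - 1/s` gives `e^{-n s + O(log s)}` as well. Hence `s⁻¹ log`
of each factor tends to `-n`, and the `N` factors contribute `-n N`.
-/

open Set Real Topology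

section Gamma

variable {a r t : ℝ}

lemma measurable_gammaPDF : Measurable (gammaPDF a r) :=
  (measurable_gammaPDFReal a r).ennreal_ofReal

/-- Exponential tilting: it reduces the Gamma mgf to the normalisation of the Gamma density. -/
lemma gammaPDF_mul_exp (hr : 0 < r) (ht : t < r) (x : ℝ) :
    gammaPDF a r x * ENNReal.ofReal (exp (t * x)) =
      ENNReal.ofReal ((r / (r - t)) ^ a) * gammaPDF a (r - t) x := by
  rcases lt_or_ge x 0 with hx | hx
  · simp [gammaPDF_of_neg hx]
  have hrt : 0 < r - t := sub_pos.2 ht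
  rw [gammaPDF_of_nonneg hx, gammaPDF_of_nonneg hx, ← ENNReal.ofReal_mul' (exp_pos _).le,
    ← ENNReal.ofReal_mul (by positivity)]
  congr 1
  rw [div_rpow hr.le hrt.le, mul_assoc, ← exp_add]
  field_simp
  ring_nf

lemma lintegral_exp_mul_gammaMeasure (ha : 0 < a) (hr : 0 < r) (ht : t < r) :
    ∫⁻ x, ENNReal.ofReal (exp (t * x)) ∂gammaMeasure a r =
      ENNReal.ofReal ((r / (r - t)) ^ a) := by
  rw [gammaMeasure, lintegral_withDensity_eq_lintegral_mul _ measurable_gammaPDF (by fun_prop)]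
  simp only [Pi.mul_apply, gammaPDF_mul_exp hr ht]
  rw [lintegral_const_mul _ measurable_gammaPDF, lintegral_gammaPDF_eq_one ha (sub_pos.2 ht),
    mul_one]

lemma integrable_exp_mul_gammaMeasure (ha : 0 < a) (hr : 0 < r) (ht : t < r) :
    Integrable (fun x => exp (t * x)) (gammaMeasure a r) := by
  rw [← lintegral_ofReal_ne_top_iff_integrable (by fun_prop)
    (ae_of_all _ fun _ => (exp_pos _).le), lintegral_exp_mul_gammaMeasure ha hr ht]
  exact ENNReal.ofReal_ne_top

lemma mgf_gammaMeasure (ha : 0 < a) (hr : 0 < r) (ht : t < r) :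
    mgf id (gammaMeasure a r) t = (r / (r - t)) ^ a := by
  rw [mgf, integral_eq_lintegral_of_nonneg_ae (ae_of_all _ fun _ => (exp_pos _).le) (by fun_prop)]
  simp only [id]
  rw [lintegral_exp_mul_gammaMeasure ha hr ht, ENNReal.toReal_ofReal (by positivity)]

lemma ae_nonneg_gammaMeasure : ∀ᵐ x ∂gammaMeasure a r, 0 ≤ x := by
  rw [ae_iff]
  simp only [not_le]
  rw [Iio_def, gammaMeasure, withDensity_apply _ measurableSet_Iio]
  exact lintegral_gammaPDF_of_nonpos le_rfl

/-- Bound the density from below on `(s, s + 1]`. -/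
lemma ofReal_le_gammaMeasure_Ioi (ha : 1 ≤ a) (hr : 0 ≤ r) {s : ℝ} (hs : 0 ≤ s) :
    ENNReal.ofReal (r ^ a / Gamma a * s ^ (a - 1) * exp (-(r * (s + 1)))) ≤
      gammaMeasure a r (Ioi s) := by
  have hΓ : 0 < Gamma a := Gamma_pos_of_pos (by linarith)
  rw [gammaMeasure, withDensity_apply _ measurableSet_Ioi]
  calc ENNReal.ofReal (r ^ a / Gamma a * s ^ (a - 1) * exp (-(r * (s + 1))))
      = ∫⁻ _ in Ioc s (s + 1), ENNReal.ofReal (r ^ a / Gamma a * s ^ (a - 1) *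
          exp (-(r * (s + 1)))) := by
        simp
    _ ≤ ∫⁻ x in Ioc s (s + 1), gammaPDF a r x := by
        refine setLIntegral_mono measurable_gammaPDF fun x ⟨hsx, hxs⟩ => ?_
        have hx : 0 ≤ x := hs.trans hsx.le
        rw [gammaPDF_of_nonneg hx]
        gcongr
    _ ≤ ∫⁻ x in Ioi s, gammaPDF a r x := lintegral_mono_set Ioc_subset_Ioi_self

end Gamma

open Finset in
lemma Real.prod_le_arith_mean_pow {ι : Type*} (s : Finset ι) {y : ι → ℝ}
    (hy : ∀ i ∈ s, 0 ≤ y i) : ∏ i ∈ s, y i ≤ ((∑ i ∈ s, y i) / #s) ^ #s := by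
  rcases s.eq_empty_or_nonempty with rfl | hne
  · simp
  have hcard : (0 : ℝ) < #s := by exact_mod_cast hne.card_pos
  have hw : ∑ _i ∈ s, (#s : ℝ)⁻¹ = 1 := by simp [hcard.ne']
  have amgm := geom_mean_le_arith_mean_weighted s (fun _ => (#s : ℝ)⁻¹) y
    (fun _ _ => by positivity) hw hy
  rw [finsetProd_rpow s y hy, ← mul_sum, inv_mul_eq_div] at amgm
  calc ∏ i ∈ s, y i = ((∏ i ∈ s, y i) ^ (#s : ℝ)⁻¹) ^ #s :=
        (rpow_inv_natCast_pow (prod_nonneg hy) (Nat.cast_pos.1 hcard).ne').symm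
    _ ≤ _ := by have := prod_nonneg hy; gcongr

section Pi

variable {ι : Type*} [Fintype ι] {ν : Measure ℝ} [IsProbabilityMeasure ν] {t : ℝ}

lemma iIndepFun_eval_pi : iIndepFun (fun i (y : ι → ℝ) => y i) (Measure.pi fun _ => ν) :=
  iIndepFun_pi (X := fun _ => id) fun _ => aemeasurable_id

lemma mgf_eval_pi (i : ι) :
    mgf (fun y : ι → ℝ => y i) (Measure.pi fun _ => ν) t = mgf id ν t := by
  rw [← mgf_id_map (measurable_pi_apply i).aemeasurable, (measurePreserving_eval _ i).map_eq]

lemma measureReal_pi_setOf_le_sum_le (ε : ℝ) (ht : 0 ≤ t)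
    (hint : Integrable (fun x => exp (t * x)) ν) :
    (Measure.pi fun _ : ι => ν).real {y | ε ≤ ∑ i, y i} ≤
      exp (-t * ε) * mgf id ν t ^ Fintype.card ι := by
  have hint_eval (i : ι) :
      Integrable (fun y : ι → ℝ => exp (t * y i)) (Measure.pi fun _ => ν) :=
    (measurePreserving_eval (fun _ => ν) i).integrable_comp_of_integrable hint
  have hsum : ∀ y : ι → ℝ, ∑ i, y i = (∑ i, fun y : ι → ℝ => y i) y := fun y => by
    simp only [Finset.sum_apply]
  simp only [hsum]
  refine (measure_ge_le_exp_mul_mgf ε ht (iIndepFun_eval_pi.integrable_exp_mul_sum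
    measurable_pi_apply fun i _ => hint_eval i)).trans ?_
  rw [iIndepFun_eval_pi.mgf_sum measurable_pi_apply]
  simp [mgf_eval_pi]

lemma card_mul_le_sum_of_pow_card_lt_prod {s : ℝ} {y : ι → ℝ} (hy : ∀ i, 0 ≤ y i)
    (h : s ^ Fintype.card ι < ∏ i, y i) : Fintype.card ι * s ≤ ∑ i, y i := by
  have hcard : Fintype.card ι ≠ 0 := by
    rintro hc
    simp [hc, Finset.univ_eq_empty_iff.2 (Fintype.card_eq_zero_iff.1 hc)] at h
  have amgm := Real.prod_le_arith_mean_pow Finset.univ fun i _ => hy i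
  rw [Finset.card_univ] at amgm
  have := lt_of_pow_lt_pow_left₀ _
    (div_nonneg (Finset.sum_nonneg fun i _ => hy i) (Nat.cast_nonneg _)) (h.trans_le amgm)
  rw [lt_div_iff₀ (by positivity)] at this
  linarith

lemma measureReal_pi_setOf_pow_card_lt_prod_le (hν : ∀ᵐ x ∂ν, 0 ≤ x) (s : ℝ) (ht : 0 ≤ t)
    (hint : Integrable (fun x => exp (t * x)) ν) :
    (Measure.pi fun _ : ι => ν).real {y | s ^ Fintype.card ι < ∏ i, y i} ≤
      exp (-t * (Fintype.card ι * s)) * mgf id ν t ^ Fintype.card ι := by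
  have hnonneg : ∀ᵐ y ∂(Measure.pi fun _ : ι => ν), ∀ i, 0 ≤ y i :=
    ae_all_iff.2 fun i => (measurePreserving_eval (fun _ => ν) i).quasiMeasurePreserving.ae hν
  refine le_trans (ENNReal.toReal_mono (measure_ne_top _ _) (measure_mono_ae ?_))
    (measureReal_pi_setOf_le_sum_le _ ht hint)
  filter_upwards [hnonneg] with y hy hlt
  exact card_mul_le_sum_of_pow_card_lt_prod hy hlt

end Pi

lemma measure_Ioi_pow_card_le_pi_setOf {ι : Type*} [Fintype ι] [Nonempty ι] (ν : Measure ℝ)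
    [SigmaFinite ν] {s : ℝ} (hs : 0 < s) :
    ν (Ioi s) ^ Fintype.card ι ≤
      (Measure.pi fun _ : ι => ν) {y | s ^ Fintype.card ι < ∏ i, y i} := by
  calc ν (Ioi s) ^ Fintype.card ι
      = (Measure.pi fun _ : ι => ν) (Set.pi univ fun _ => Ioi s) := by simp [Measure.pi_pi]
    _ ≤ _ := by
        refine measure_mono fun y hy => ?_
        simpa using Finset.prod_lt_prod_of_nonempty (f := fun _ => s) (g := y) (fun _ _ => hs)
          (fun i _ => hy i (mem_univ i)) Finset.univ_nonempty

noncomputable def gammaProdTail (n : ℕ) (a s : ℝ) : ℝ :=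
  (Measure.pi fun _ : Fin n => gammaMeasure a 1).real {y | s ^ n < ∏ i, y i}

section GammaProdTail

variable {n : ℕ} {a s : ℝ}

/-- The Chernoff bound with tilt `t = 1 - 1/s`. -/
lemma gammaProdTail_le (ha : 0 < a) (hs : 1 < s) :
    gammaProdTail n a s ≤ exp (-(n * (s - 1))) * (s ^ a) ^ n := by
  have hs0 : 0 < s := zero_lt_one.trans hs
  have := isProbabilityMeasure_gammaMeasure ha one_pos
  have ht : 1 - s⁻¹ < 1 := sub_lt_self _ (inv_pos.2 hs0)
  have chernoff := measureReal_pi_setOf_pow_card_lt_prod_le (ι := Fin n) ae_nonneg_gammaMeasure s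
    (sub_nonneg.2 (inv_le_one_of_one_le₀ hs.le)) (integrable_exp_mul_gammaMeasure ha one_pos ht)
  have hexp : -(1 - s⁻¹) * (n * s) = -(n * (s - 1)) := by field_simp
  have hbase : 1 / (1 - (1 - s⁻¹)) = s := by simp
  rwa [mgf_gammaMeasure ha one_pos ht, Fintype.card_fin, hexp, hbase] at chernoff

lemma pow_le_gammaProdTail (ha : 1 ≤ a) (hn : 0 < n) (hs : 0 < s) :
    (s ^ (a - 1) * exp (-(s + 1)) / Gamma a) ^ n ≤ gammaProdTail n a s := by
  have := isProbabilityMeasure_gammaMeasure (zero_lt_one.trans_le ha) one_pos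
  have : Nonempty (Fin n) := Fin.pos_iff_nonempty.1 hn
  have hΓ : 0 < Gamma a := Gamma_pos_of_pos (zero_lt_one.trans_le ha)
  have htail :
      ENNReal.ofReal (s ^ (a - 1) * exp (-(s + 1)) / Gamma a) ≤ gammaMeasure a 1 (Ioi s) := by
    convert ofReal_le_gammaMeasure_Ioi ha zero_le_one hs.le using 2
    simp only [one_rpow, one_mul]
    ring
  rw [gammaProdTail, measureReal_def, ← ENNReal.ofReal_le_iff_le_toReal (measure_ne_top _ _),
    ENNReal.ofReal_pow (by positivity)]
  calc _ ≤ gammaMeasure a 1 (Ioi s) ^ n := by gcongr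
    _ ≤ _ := by
      simpa only [Fintype.card_fin] using
        measure_Ioi_pow_card_le_pi_setOf (ι := Fin n) (gammaMeasure a 1) hs

lemma gammaProdTail_pos (ha : 1 ≤ a) (hn : 0 < n) (hs : 0 < s) : 0 < gammaProdTail n a s :=
  lt_of_lt_of_le (by have := Gamma_pos_of_pos (zero_lt_one.trans_le ha); positivity)
    (pow_le_gammaProdTail ha hn hs)

lemma tendsto_inv_mul_log_gammaProdTail (ha : 1 ≤ a) (hn : 0 < n) :
    Tendsto (fun s => s⁻¹ * log (gammaProdTail n a s)) atTop (𝓝 (-n)) := by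
  have hΓ : 0 < Gamma a := Gamma_pos_of_pos (zero_lt_one.trans_le ha)
  have hlog : Tendsto (fun s => log s / s) atTop (𝓝 0) := by
    simpa using tendsto_pow_log_div_mul_add_atTop 1 0 1 one_ne_zero
  have hinv := tendsto_inv_atTop_zero (𝕜 := ℝ)
  have hlower : Tendsto (fun s => n * ((a - 1) * (log s / s) - 1 - (1 + log (Gamma a)) * s⁻¹))
      atTop (𝓝 (-n)) := by
    simpa using
      ((hlog.const_mul (a - 1)).sub_const 1).sub (hinv.const_mul _) |>.const_mul (n : ℝ)
  have hupper : Tendsto (fun s => n * (-1 + s⁻¹ + a * (log s / s))) atTop (𝓝 (-n)) := by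
    simpa using ((hinv.const_add (-1)).add (hlog.const_mul a)).const_mul (n : ℝ)
  refine tendsto_of_tendsto_of_tendsto_of_le_of_le' hlower hupper ?_ ?_
  · filter_upwards [eventually_gt_atTop 0] with s hs
    calc _ = s⁻¹ * log ((s ^ (a - 1) * exp (-(s + 1)) / Gamma a) ^ n) := by
          rw [log_pow, log_div (by positivity) hΓ.ne', log_mul (by positivity) (exp_pos _).ne',
            log_rpow hs, log_exp]
          field_simp
          ring
      _ ≤ _ := by
          gcongr
          exact pow_le_gammaProdTail ha hn hs
  · filter_upwards [eventually_gt_atTop 1] with s hs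
    have hs0 : 0 < s := zero_lt_one.trans hs
    calc _ ≤ s⁻¹ * log (exp (-(n * (s - 1))) * (s ^ a) ^ n) := by
          gcongr
          exacts [gammaProdTail_pos ha hn hs0, gammaProdTail_le (by linarith) hs]
      _ = _ := by
          rw [log_mul (exp_pos _).ne' (by positivity), log_exp, log_pow, log_rpow hs0]
          field_simp
          ring

end GammaProdTail

lemma prodGammaMeasure_Ioi_pow (n k : ℕ) (s : ℝ) :
    (prodGammaMeasure n k (Ioi (s ^ n))).toReal = gammaProdTail n k s := by
  rw [prodGammaMeasure, Measure.map_apply (by fun_prop) measurableSet_Ioi]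
  rfl

theorem hole_probability_finite_ginibre_general {Ω : Type*} [MeasureSpace Ω]
    (n N : ℕ) (hn : 0 < n)
    (R : ℕ → Ω → ℝ) (hRm : ∀ k, Measurable (R k))
    (hRdist : ∀ k, k < N → Measure.map (fun ω => R k ω ^ 2) ℙ = prodGammaMeasure n (k + 1)) :
    Tendsto (fun r : ℝ =>
        r ^ (-(2 : ℝ) / n) *
          Real.log (∏ k ∈ Finset.range N, (ℙ {ω | r ^ 2 < R k ω ^ 2}).toReal))
      atTop (nhds (-((n : ℝ) * N))) := by
  have hn' : (0 : ℝ) < n := Nat.cast_pos.2 hn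
  have hpow {r : ℝ} (hr : 0 ≤ r) : (r ^ (2 / n : ℝ)) ^ n = r ^ 2 := by
    rw [← rpow_mul_natCast hr, div_mul_cancel₀ _ hn'.ne']
    norm_num
  have hprob {k : ℕ} (hk : k < N) {r : ℝ} (hr : 0 ≤ r) :
      (ℙ {ω | r ^ 2 < R k ω ^ 2}).toReal = gammaProdTail n (k + 1 : ℕ) (r ^ (2 / n : ℝ)) := by
    rw [← prodGammaMeasure_Ioi_pow, hpow hr, ← hRdist k hk,
      Measure.map_apply (by fun_prop) measurableSet_Ioi]
    rfl
  have hlim : Tendsto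
      (fun s => ∑ k ∈ Finset.range N, s⁻¹ * log (gammaProdTail n (k + 1 : ℕ) s))
      atTop (𝓝 (-(n * N))) := by
    simpa [mul_comm] using tendsto_finsetSum (Finset.range N) fun k _ =>
      tendsto_inv_mul_log_gammaProdTail (a := (k + 1 : ℕ)) (by simp) hn
  refine (hlim.comp (tendsto_rpow_atTop (div_pos two_pos hn'))).congr' ?_
  filter_upwards [eventually_gt_atTop 0] with r hr
  rw [Function.comp_apply, ← Finset.mul_sum, neg_div, rpow_neg hr.le, Finset.prod_congr rfl
    fun k hk => hprob (Finset.mem_range.1 hk) hr.le, log_prod fun k _ =>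
      (gammaProdTail_pos (by simp) hn (by positivity)).ne']

/-- Hole probability decay for the generalized finite-`N` Ginibre ensemble:
`lim_{r→∞} r^{−2/n} log ∏_{k=1}^N P(R_k² > r²) = −nN`.
Here `R k` stands for `R_{k+1}`, so `R k ^ 2` is a product of `n` i.i.d. `Gamma(k+1,1)`. -/
theorem hole_probability_finite_ginibre {Ω : Type*} [MeasureSpace Ω]
    [IsProbabilityMeasure (ℙ : Measure Ω)]
    (n N : ℕ) (hn : 0 < n) (hN : 0 < N)
    (R : ℕ → Ω → ℝ) (hRm : ∀ k, Measurable (R k)) (hR0 : ∀ k ω, 0 ≤ R k ω)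
    (hRdist : ∀ k, k < N → Measure.map (fun ω => R k ω ^ 2) ℙ = prodGammaMeasure n (k + 1)) :
    Tendsto (fun r : ℝ =>
        r ^ (-(2 : ℝ) / n) *
          Real.log (∏ k ∈ Finset.range N, (ℙ {ω | r ^ 2 < R k ω ^ 2}).toReal))
      atTop (nhds (-((n : ℝ) * N))) :=
  hole_probability_finite_ginibre_general n N hn R hRm hRdist
end

section
/- For complex numbers z₁,…,z_N with polar decompositions z_j = r_j e^{iθ_j}, the angular average of the squared Vandermonde satisfies (1/(2π)^N)∫_{[0,2π]^N} ∏_{1≤i<j≤N} |z_i − z_j|² dθ_1⋯dθ_N = ∑_{σ∈S_N} ∏_{j=1}^N r_j^{2σ(j)−2} = per[r_i^{2(j−1)}]_{i,j=1}^N. -/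
/-!
By the Leibniz formula, `|det V(z)|² = det V(z) · conj (det V(z))` is a double sum over
`σ, τ ∈ S_N` of `sign σ · sign τ · ∏ⱼ zⱼ ^ σ(j) · conj zⱼ ^ τ(j)`. For `zⱼ = rⱼ e^{iθⱼ}` each such
monomial is a product of functions of the single angles `θⱼ`, and `∫₀^{2π} e^{i(σ(j) - τ(j))θ} dθ`
vanishes unless `σ(j) = τ(j)`. Only the diagonal `σ = τ` survives, where the signs square to `1`
and the monomial is `∏ⱼ rⱼ ^ 2σ(j)`.
-/

open MeasureTheory Complex ComplexConjugate Equiv Finset Matrix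
open scoped Real

theorem integral_exp_int_mul_I_Icc (n : ℤ) :
    ∫ t in Set.Icc 0 (2 * π), exp (n * t * I) = if n = 0 then (2 * π : ℂ) else 0 := by
  rw [integral_Icc_eq_integral_Ioc, ← intervalIntegral.integral_of_le (by positivity)]
  split_ifs with hn
  · simp [hn]
  have hnI : (n : ℂ) * I ≠ 0 := by simp [hn]
  have hperiod : exp (n * I * (2 * π : ℝ)) = 1 := by
    rw [← exp_int_mul_two_pi_mul_I n]
    push_cast
    ring_nf
  simp_rw [mul_right_comm _ _ I]
  rw [integral_exp_mul_complex hnI, hperiod]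
  simp

theorem polar_pow_mul_conj_pow (ρ t : ℝ) (a b : ℕ) :
    (ρ * exp (t * I)) ^ a * conj (ρ * exp (t * I)) ^ b
      = ρ ^ (a + b) * exp (((a - b : ℤ) : ℂ) * t * I) := by
  rw [map_mul, conj_ofReal, ← exp_conj, map_mul, conj_ofReal, conj_I, mul_pow, mul_pow,
    mul_mul_mul_comm, ← pow_add, ← exp_nat_mul, ← exp_nat_mul, ← exp_add]
  push_cast
  ring_nf

theorem integral_polar_pow_mul_conj_pow (ρ : ℝ) (a b : ℕ) :
    ∫ t in Set.Icc 0 (2 * π), (ρ * exp (t * I)) ^ a * conj (ρ * exp (t * I)) ^ b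
      = if a = b then 2 * π * (ρ : ℂ) ^ (2 * a) else 0 := by
  simp_rw [polar_pow_mul_conj_pow, integral_const_mul, integral_exp_int_mul_I_Icc, sub_eq_zero,
    Nat.cast_inj]
  split_ifs with hab
  · rw [hab, two_mul]; ring
  · rw [mul_zero]

theorem setIntegral_univ_pi_prod {ι X 𝕜 : Type*} [Fintype ι] [MeasurableSpace X] [RCLike 𝕜]
    (μ : Measure X) [SigmaFinite μ] (s : Set X) (f : ι → X → 𝕜) :
    ∫ x in Set.univ.pi (fun _ => s), ∏ i, f i (x i) ∂(Measure.pi fun _ => μ)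
      = ∏ i, ∫ t in s, f i t ∂μ := by
  rw [Measure.restrict_pi_pi]
  exact integral_fintype_prod_eq_prod f

theorem integral_torus_polar_monomial {ι : Type*} [Fintype ι] (r : ι → ℝ) (a b : ι → ℕ) :
    ∫ θ in Set.univ.pi (fun _ => Set.Icc 0 (2 * π)),
        ∏ j, (r j * exp (θ j * I)) ^ a j * conj (r j * exp (θ j * I)) ^ b j
        ∂(Measure.pi fun _ => volume)
      = if a = b then (2 * π) ^ Fintype.card ι * ∏ j, (r j : ℂ) ^ (2 * a j) else 0 := by
  rw [setIntegral_univ_pi_prod (volume : Measure ℝ) _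
    (fun j (t : ℝ) => (r j * exp (t * I)) ^ a j * conj (r j * exp (t * I)) ^ b j)]
  simp_rw [integral_polar_pow_mul_conj_pow]
  split_ifs with hab
  · simp [hab, prod_mul_distrib]
  · obtain ⟨j, hj⟩ := Function.ne_iff.mp hab
    exact prod_eq_zero (mem_univ j) (if_neg hj)

theorem norm_det_vandermonde {K : Type*} [NormedField K] {n : ℕ} (v : Fin n → K) :
    ‖(vandermonde v).det‖
      = ∏ p ∈ univ.filter (fun p : Fin n × Fin n => p.1 < p.2), ‖v p.1 - v p.2‖ := by
  rw [det_vandermonde, norm_prod, Finset.prod_filter, Fintype.prod_prod_type]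
  refine prod_congr rfl fun i _ => ?_
  rw [norm_prod, ← prod_filter, filter_lt_eq_Ioi]
  exact prod_congr rfl fun j _ => norm_sub_rev _ _

theorem sq_norm_det_vandermonde {n : ℕ} (v : Fin n → ℂ) :
    ((‖(vandermonde v).det‖ ^ 2 : ℝ) : ℂ)
      = ∑ σ : Perm (Fin n), ∑ τ : Perm (Fin n), ((Perm.sign σ : ℤ) * (Perm.sign τ : ℤ) : ℂ) *
          ∏ j, v j ^ (σ j : ℕ) * conj (v j) ^ (τ j : ℕ) := by
  rw [ofReal_pow, ← mul_conj', ← det_transpose, det_apply', map_sum, sum_mul_sum]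
  refine sum_congr rfl fun σ _ => sum_congr rfl fun τ _ => ?_
  simp only [vandermonde, transpose_apply, of_apply, map_mul, map_intCast, map_prod, map_pow,
    prod_mul_distrib]
  ring

theorem integral_sq_norm_det_vandermonde_polar {n : ℕ} (r : Fin n → ℝ) :
    ∫ θ in Set.univ.pi (fun _ => Set.Icc 0 (2 * π)),
        ‖(vandermonde fun j => (r j : ℂ) * exp (θ j * I)).det‖ ^ 2 ∂(Measure.pi fun _ => volume)
      = (2 * π) ^ n * ∑ σ : Perm (Fin n), ∏ j, r j ^ (2 * (σ j : ℕ)) := by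
  have hint (a b : Fin n → ℕ) : IntegrableOn
      (fun θ : Fin n → ℝ => ∏ j, (r j * exp (θ j * I)) ^ a j * conj (r j * exp (θ j * I)) ^ b j)
      (Set.univ.pi fun _ => Set.Icc 0 (2 * π)) (Measure.pi fun _ => volume) :=
    ContinuousOn.integrableOn_compact (isCompact_univ_pi fun _ => isCompact_Icc) (by fun_prop)
  have hexp (σ τ : Perm (Fin n)) : (fun j => (σ j : ℕ)) = (fun j => (τ j : ℕ)) ↔ σ = τ := by
    simp only [funext_iff, Fin.val_inj, Equiv.ext_iff]
  have hsign (σ : Perm (Fin n)) : ((Perm.sign σ : ℤ) : ℂ) * (Perm.sign σ : ℤ) = 1 := by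
    rw [← Int.cast_mul, ← Units.val_mul, Int.units_mul_self, Units.val_one, Int.cast_one]
  apply ofReal_injective
  rw [← integral_complex_ofReal]
  simp_rw [sq_norm_det_vandermonde]
  rw [integral_finsetSum _ fun σ _ => integrable_finsetSum _ fun τ _ => (hint _ _).const_mul _]
  simp_rw [integral_finsetSum _ fun τ _ => (hint _ _).const_mul _, integral_const_mul,
    integral_torus_polar_monomial, hexp, mul_ite, mul_zero, sum_ite_eq, mem_univ, if_true,
    ← mul_assoc, hsign, one_mul, ← mul_sum]
  push_cast
  simp

theorem angular_average_vandermonde_general (N : ℕ) (r : Fin N → ℝ) :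
    (1 / (2 * Real.pi) ^ N) *
        ∫ θ : Fin N → ℝ in Set.univ.pi (fun _ => Set.Icc 0 (2 * Real.pi)),
          ∏ p ∈ Finset.univ.filter (fun p : Fin N × Fin N => p.1 < p.2),
            ‖(r p.1 : ℂ) * Complex.exp ((θ p.1 : ℝ) * Complex.I) -
              (r p.2 : ℂ) * Complex.exp ((θ p.2 : ℝ) * Complex.I)‖ ^ 2
          ∂(Measure.pi fun _ => volume)
      = ∑ σ : Equiv.Perm (Fin N), ∏ j, r j ^ (2 * (σ j : ℕ)) := by
  have hvandermonde (θ : Fin N → ℝ) :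
      ∏ p ∈ Finset.univ.filter (fun p : Fin N × Fin N => p.1 < p.2),
          ‖(r p.1 : ℂ) * exp (θ p.1 * I) - r p.2 * exp (θ p.2 * I)‖ ^ 2
        = ‖(vandermonde fun j => (r j : ℂ) * exp (θ j * I)).det‖ ^ 2 := by
    rw [norm_det_vandermonde, prod_pow]
  simp_rw [hvandermonde, integral_sq_norm_det_vandermonde_polar]
  rw [one_div, inv_mul_cancel_left₀ (by positivity)]

/-- Angular average of the squared Vandermonde determinant:
`(1/(2π)^N) ∫ ∏_{i<j} |r_i e^{iθ_i} − r_j e^{iθ_j}|² dθ = ∑_{σ∈S_N} ∏_j r_j^{2σ(j)}`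
(with zero-based indexing), the permanent `per[r_i^{2(j−1)}]`. -/
theorem angular_average_vandermonde (N : ℕ) (r : Fin N → ℝ) (hr : ∀ j, 0 ≤ r j) :
    (1 / (2 * Real.pi) ^ N) *
        ∫ θ : Fin N → ℝ in Set.univ.pi (fun _ => Set.Icc 0 (2 * Real.pi)),
          ∏ p ∈ Finset.univ.filter (fun p : Fin N × Fin N => p.1 < p.2),
            ‖(r p.1 : ℂ) * Complex.exp ((θ p.1 : ℝ) * Complex.I) -
              (r p.2 : ℂ) * Complex.exp ((θ p.2 : ℝ) * Complex.I)‖ ^ 2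
          ∂(Measure.pi fun _ => volume)
      = ∑ σ : Equiv.Perm (Fin N), ∏ j, r j ^ (2 * (σ j : ℕ)) :=
  angular_average_vandermonde_general N r
end
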